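/- arXiv:2506.19785 — 3 statements merged into one kernel-verified Lean document; each statement's English description precedes it below -/
import Mathlib

section
/- Define value iterates V₀(s) = 0 and V_{n+1}(s) = R(s) + γ·∑_{s'} P(s,s')·V_n(s') on a finite state space, where 0 ≤ γ < 1 and transition kernels are probability vectors. Let M be a bound on |V_n|, and for states s₁, s₂ let d(s₁,s₂) := |R(s₁)-R(s₂)| + W(P(s₁,·), P(s₂,·)), where W(p,q) = ∑_{s'} |p(s') - q(s')| · M, and let d_max = sup over pairs of d. Then |V_n(s₁) - V_n(s₂)| ≤ ∑_{k<n} γ^k · d_max; in particular, for all n, |V_n(s₁) - V_n(s₂)| ≤ d_max / (1-γ). -/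
open Finset

/-- Value-difference bound for value iteration: if `d_max` bounds
`|R s₁ − R s₂| + (∑ |P s₁ s' − P s₂ s'|)·M` over all pairs, where `M` bounds `|Vₙ|`,
then `|Vₙ s₁ − Vₙ s₂| ≤ (∑_{k<n} γ^k)·d_max ≤ d_max/(1−γ)`. -/
theorem value_difference_bound {S : Type*} [Fintype S]
    (R : S → ℝ) (P : S → S → ℝ) (γ : ℝ) (hγ0 : 0 ≤ γ) (hγ1 : γ < 1)
    (hPnonneg : ∀ s s', 0 ≤ P s s') (hPsum : ∀ s, ∑ s', P s s' = 1)
    (V : ℕ → S → ℝ) (hV0 : ∀ s, V 0 s = 0)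
    (hVsucc : ∀ n s, V (n + 1) s = R s + γ * ∑ s', P s s' * V n s')
    (M : ℝ) (hM : ∀ n s, |V n s| ≤ M)
    (dmax : ℝ)
    (hdmax : ∀ s₁ s₂, |R s₁ - R s₂| + (∑ s', |P s₁ s' - P s₂ s'|) * M ≤ dmax) :
    ∀ n s₁ s₂,
      |V n s₁ - V n s₂| ≤ (∑ k ∈ Finset.range n, γ ^ k) * dmax ∧
      |V n s₁ - V n s₂| ≤ dmax / (1 - γ) := by
  intro n s₁ s₂
  have hγ1' : 0 < 1 - γ := by linarith
  have hdmax0 : 0 ≤ dmax := by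
    have := hdmax s₁ s₁
    simp at this
    linarith
  have hM0 : 0 ≤ M := le_trans (abs_nonneg _) (hM 0 s₁)
  -- main bound: for n ≥ 1, |V n s₁ - V n s₂| ≤ dmax
  have key : ∀ m t₁ t₂, |V (m + 1) t₁ - V (m + 1) t₂| ≤ dmax := by
    intro m t₁ t₂
    have hsum : ∑ s', P t₁ s' * V m s' - ∑ s', P t₂ s' * V m s'
        = ∑ s', (P t₁ s' - P t₂ s') * V m s' := by
      rw [← Finset.sum_sub_distrib]
      congr 1; ext s'; ring
    have hX : |∑ s', (P t₁ s' - P t₂ s') * V m s'|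
        ≤ (∑ s', |P t₁ s' - P t₂ s'|) * M := by
      calc |∑ s', (P t₁ s' - P t₂ s') * V m s'|
          ≤ ∑ s', |(P t₁ s' - P t₂ s') * V m s'| := Finset.abs_sum_le_sum_abs _ _
        _ ≤ ∑ s', |P t₁ s' - P t₂ s'| * M := by
            apply Finset.sum_le_sum
            intro s' _
            rw [abs_mul]
            exact mul_le_mul_of_nonneg_left (hM m s') (abs_nonneg _)
        _ = (∑ s', |P t₁ s' - P t₂ s'|) * M := by rw [Finset.sum_mul]
    have hXnn : 0 ≤ (∑ s', |P t₁ s' - P t₂ s'|) * M :=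
      mul_nonneg (Finset.sum_nonneg fun _ _ => abs_nonneg _) hM0
    have h1 : V (m + 1) t₁ - V (m + 1) t₂
        = (R t₁ - R t₂) + γ * ∑ s', (P t₁ s' - P t₂ s') * V m s' := by
      rw [hVsucc, hVsucc, ← hsum]; ring
    calc |V (m + 1) t₁ - V (m + 1) t₂|
        ≤ |R t₁ - R t₂| + |γ * ∑ s', (P t₁ s' - P t₂ s') * V m s'| := by
          rw [h1]; exact abs_add_le _ _
      _ ≤ |R t₁ - R t₂| + γ * ((∑ s', |P t₁ s' - P t₂ s'|) * M) := by
          rw [abs_mul, abs_of_nonneg hγ0]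
          exact add_le_add (le_refl _) (mul_le_mul_of_nonneg_left hX hγ0)
      _ ≤ |R t₁ - R t₂| + (∑ s', |P t₁ s' - P t₂ s'|) * M := by
          nlinarith
      _ ≤ dmax := hdmax t₁ t₂
  match n with
  | 0 =>
    simp [hV0]
    positivity
  | Nat.succ m =>
    have h := key m s₁ s₂
    have hgeom1 : (1 : ℝ) ≤ ∑ k ∈ Finset.range (m + 1), γ ^ k := by
      calc (1 : ℝ) = γ ^ 0 := by norm_num
        _ ≤ ∑ k ∈ Finset.range (m + 1), γ ^ k := by
            apply Finset.single_le_sum (f := fun k => γ ^ k)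
            · intro i _; positivity
            · simp
    have hgeom2 : (∑ k ∈ Finset.range (m + 1), γ ^ k) ≤ 1 / (1 - γ) := by
      rw [geom_sum_eq (by linarith)]
      have heq : (γ ^ (m + 1) - 1) / (γ - 1) = (1 - γ ^ (m + 1)) / (1 - γ) := by
        rw [← neg_div_neg_eq]; ring_nf
      rw [heq]
      gcongr
      nlinarith [pow_nonneg hγ0 (m + 1)]
    constructor
    · nlinarith [mul_le_mul_of_nonneg_right hgeom1 hdmax0]
    · have : dmax ≤ dmax / (1 - γ) := by
        rw [le_div_iff₀ hγ1']; nlinarith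
      linarith
end

section
/- Suppose R₁, R₂ : X → ℝ satisfy |R₁(x) − R₂(x)| ≤ ε_R for all x, and T₁, T₂ : X → (S → ℝ) give probability mass functions on a finite set S with ‖T₁(x) − T₂(x)‖₁ ≤ ε_T for all x. Let V : S → ℝ satisfy 0 ≤ V(s) ≤ R_max/(1−γ) for all s, with 0 ≤ γ < 1 and R_max ≥ 0. Then for all x, |R₁(x) + γ·∑_s T₁(x)(s)·V(s) − (R₂(x) + γ·∑_s T₂(x)(s)·V(s))| ≤ ε_R + γ·ε_T·R_max/(2(1−γ)). -/
open Finset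

/-- Single-step transfer estimate: reward and transition discrepancies bound the
difference of one-step Bellman backups, with the factor `R_max/(2(1−γ))` coming from
the centering trick. -/
theorem one_step_transfer_bound {X : Type*} {S : Type*} [Fintype S]
    (R₁ R₂ : X → ℝ) (T₁ T₂ : X → S → ℝ) (V : S → ℝ)
    (εR εT γ Rmax : ℝ) (hγ0 : 0 ≤ γ) (hγ1 : γ < 1) (hRmax : 0 ≤ Rmax)
    (hR : ∀ x, |R₁ x - R₂ x| ≤ εR)
    (hT1prob : ∀ x, (∀ s, 0 ≤ T₁ x s) ∧ ∑ s, T₁ x s = 1)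
    (hT2prob : ∀ x, (∀ s, 0 ≤ T₂ x s) ∧ ∑ s, T₂ x s = 1)
    (hT : ∀ x, ∑ s, |T₁ x s - T₂ x s| ≤ εT)
    (hV : ∀ s, 0 ≤ V s ∧ V s ≤ Rmax / (1 - γ)) :
    ∀ x, |(R₁ x + γ * ∑ s, T₁ x s * V s) - (R₂ x + γ * ∑ s, T₂ x s * V s)| ≤
      εR + γ * εT * (Rmax / (2 * (1 - γ))) := by
  intro x
  set c : ℝ := Rmax / (2 * (1 - γ)) with hc
  have h1γ : 0 < 1 - γ := by linarith
  have hc0 : 0 ≤ c := by positivity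
  have hc2 : Rmax / (1 - γ) = 2 * c := by
    rw [hc, mul_div_assoc', mul_div_mul_left _ _ (by norm_num : (2:ℝ) ≠ 0)]
  have key : ∑ s, T₁ x s * V s - ∑ s, T₂ x s * V s
      = ∑ s, (T₁ x s - T₂ x s) * (V s - c) := by
    rw [← Finset.sum_sub_distrib]
    have e : ∀ s : S, T₁ x s * V s - T₂ x s * V s
        = (T₁ x s - T₂ x s) * (V s - c) + c * (T₁ x s - T₂ x s) := by
      intro s; ring
    rw [Finset.sum_congr rfl (fun s _ => e s), Finset.sum_add_distrib,
      ← Finset.mul_sum, Finset.sum_sub_distrib, (hT1prob x).2, (hT2prob x).2]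
    simp
  have hsum : |∑ s, T₁ x s * V s - ∑ s, T₂ x s * V s| ≤ εT * c := by
    rw [key]
    calc |∑ s, (T₁ x s - T₂ x s) * (V s - c)|
        ≤ ∑ s, |(T₁ x s - T₂ x s) * (V s - c)| := Finset.abs_sum_le_sum_abs _ _
      _ ≤ ∑ s, |T₁ x s - T₂ x s| * c := by
          apply Finset.sum_le_sum
          intro s _
          rw [abs_mul]
          apply mul_le_mul_of_nonneg_left _ (abs_nonneg _)
          rw [abs_le]
          have := hV s
          constructor <;> [linarith [this.1]; linarith [hc2 ▸ this.2]]
      _ = (∑ s, |T₁ x s - T₂ x s|) * c := by rw [← Finset.sum_mul]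
      _ ≤ εT * c := mul_le_mul_of_nonneg_right (hT x) hc0
  calc |(R₁ x + γ * ∑ s, T₁ x s * V s) - (R₂ x + γ * ∑ s, T₂ x s * V s)|
      = |(R₁ x - R₂ x) + γ * (∑ s, T₁ x s * V s - ∑ s, T₂ x s * V s)| := by ring_nf
    _ ≤ |R₁ x - R₂ x| + |γ * (∑ s, T₁ x s * V s - ∑ s, T₂ x s * V s)| := abs_add_le _ _
    _ ≤ εR + γ * (εT * c) := by
        gcongr
        · exact hR x
        · rw [abs_mul, abs_of_nonneg hγ0]
          exact mul_le_mul_of_nonneg_left hsum hγ0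
    _ = εR + γ * εT * c := by ring
end

section
/- Let E be an equivalence relation on a finite state space S such that whenever (s,t) ∈ E: R(s,a) = R(t,a) for all actions a, and for every equivalence class c, ∑_{s'∈c} P(s,a)(s') = ∑_{s'∈c} P(t,a)(s'). Then for all n, the value iterates V_n (defined by V₀ = 0, V_{n+1}(s) = max_a [R(s,a) + γ ∑_{s'} P(s,a)(s') V_n(s')]) are constant on equivalence classes: (s,t) ∈ E implies V_n(s) = V_n(t). -/
/-!
Against a function that is constant on `E`-classes, a transition distribution only matters
through the mass it puts on each class. So if `V n` is `E`-invariant, bisimilar states see the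
same rewards and the same expected continuation values for every action, and `V (n + 1)` is
invariant too.
-/

open Finset

section ClassSums

variable {S R : Type*} [Fintype S] [CommSemiring R] (r : Setoid S) [DecidableRel r.r]

theorem sum_mul_eq_sum_quotient_mul_sum_class (p f : S → R)
    (hf : ∀ x y, r x y → f x = f y) :
    ∑ s, p s * f s =
      ∑ c : Quotient r, f c.out * ∑ s ∈ univ.filter (fun s => r c.out s), p s := by
  classical
  rw [← sum_fiberwise univ (fun s => (⟦s⟧ : Quotient r))]
  refine sum_congr rfl fun c _ => ?_
  have hfiber : univ.filter (fun s => (⟦s⟧ : Quotient r) = c) = univ.filter (fun s => r c.out s) :=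
    filter_congr fun s _ => Quotient.mk_eq_iff_out.trans ⟨r.symm, r.symm⟩
  rw [hfiber, mul_sum]
  exact sum_congr rfl fun s hs => by rw [hf _ _ (mem_filter.mp hs).2, mul_comm]

theorem sum_mul_eq_of_sum_class_eq (p q f : S → R) (hf : ∀ x y, r x y → f x = f y)
    (hpq : ∀ u, ∑ s ∈ univ.filter (fun s => r u s), p s = ∑ s ∈ univ.filter (fun s => r u s), q s) :
    ∑ s, p s * f s = ∑ s, q s * f s := by
  simp only [sum_mul_eq_sum_quotient_mul_sum_class r _ f hf, hpq]

end ClassSums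

theorem bisimulation_value_invariant_general {S A : Type*} [Fintype S] [Fintype A] [Nonempty A]
    (E : S → S → Prop) (hE : Equivalence E)
    (R : S → A → ℝ) (P : S → A → S → ℝ) (γ : ℝ)
    [DecidableRel E]
    (hR : ∀ s t, E s t → ∀ a, R s a = R t a)
    (hP : ∀ s t, E s t → ∀ a (u : S),
      ∑ s' ∈ Finset.univ.filter (fun s' => E u s'), P s a s' =
        ∑ s' ∈ Finset.univ.filter (fun s' => E u s'), P t a s')
    (V : ℕ → S → ℝ) (hV0 : ∀ s, V 0 s = 0)
    (hVsucc : ∀ n s, V (n + 1) s =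
      Finset.univ.sup' Finset.univ_nonempty
        (fun a => R s a + γ * ∑ s', P s a s' * V n s')) :
    ∀ n s t, E s t → V n s = V n t := by
  intro n
  induction n with
  | zero => intro s t _; rw [hV0, hV0]
  | succ n ih =>
    intro s t hst
    let r : Setoid S := ⟨E, hE⟩
    rw [hVsucc, hVsucc]
    refine sup'_congr _ rfl fun a _ => ?_
    rw [hR s t hst a, sum_mul_eq_of_sum_class_eq r _ _ _ ih (hP s t hst a)]

/-- If `E` is a bisimulation relation (equal rewards, and equal transition probabilities
into each equivalence class), then the value-iteration iterates are constant on
`E`-equivalence classes. -/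
theorem bisimulation_value_invariant {S A : Type*} [Fintype S] [Fintype A] [Nonempty A]
    (E : S → S → Prop) (hE : Equivalence E)
    (R : S → A → ℝ) (P : S → A → S → ℝ) (γ : ℝ) (hγ0 : 0 ≤ γ) (hγ1 : γ < 1)
    [DecidableRel E]
    (hPnonneg : ∀ s a s', 0 ≤ P s a s') (hPsum : ∀ s a, ∑ s', P s a s' = 1)
    (hR : ∀ s t, E s t → ∀ a, R s a = R t a)
    (hP : ∀ s t, E s t → ∀ a (u : S),
      ∑ s' ∈ Finset.univ.filter (fun s' => E u s'), P s a s' =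
        ∑ s' ∈ Finset.univ.filter (fun s' => E u s'), P t a s')
    (V : ℕ → S → ℝ) (hV0 : ∀ s, V 0 s = 0)
    (hVsucc : ∀ n s, V (n + 1) s =
      Finset.univ.sup' Finset.univ_nonempty
        (fun a => R s a + γ * ∑ s', P s a s' * V n s')) :
    ∀ n s t, E s t → V n s = V n t :=
  bisimulation_value_invariant_general E hE R P γ hR hP V hV0 hVsucc
end
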